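/- Let m ≥ 1, let b₁, …, b_m ≥ 2 be integers and ε₁, …, ε_m ∈ {+1, −1} be signs. For 1 ≤ k ≤ m let v_k = [⟨b_j : ε_j⟩_{j=k}^m] be the value of the tail continued fraction. Then each v_k is a well-defined nonzero rational number, and ∏_{k=1}^m |v_k| = 1/q_m, where q_m is defined by the recursion q₋₁ = 0, q₀ = 1, q_{l+1} = b_{l+1} q_l + ε_{l+1} q_{l−1} for 0 ≤ l ≤ m−1. -/

import Mathlib

/-- The finite signed continued fraction `ε_k/(b_k + ε_{k+1}/(b_{k+1} + ⋯))`,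
starting at index `k` and of length `m` (indices are 0-based). -/
noncomputable def scf (b ε : ℕ → ℤ) : ℕ → ℕ → ℝ
  | _, 0 => 0
  | k, m + 1 => (ε k : ℝ) / ((b k : ℝ) + scf b ε (k + 1) m)

/-- The signed continued fraction starting at index `k` of length `m` is well
defined: all intermediate denominators are nonzero. -/
def scfWD (b ε : ℕ → ℤ) : ℕ → ℕ → Prop
  | _, 0 => True
  | k, m + 1 => ((b k : ℝ) + scf b ε (k + 1) m ≠ 0) ∧ scfWD b ε (k + 1) m

/-- The denominators of the convergents of a signed continued fraction with
entries `b` and signs `ε` (0-based): `scfDen (l+1)` is the paper's `q_l`, with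
`q_{-1} = 0`, `q₀ = 1`, `q_{l+1} = b_{l+1} q_l + ε_{l+1} q_{l-1}`. -/
def scfDen (b ε : ℕ → ℤ) : ℕ → ℤ
  | 0 => 0
  | 1 => 1
  | l + 2 => b l * scfDen b ε (l + 1) + ε l * scfDen b ε l

/-!
Let `v_k` be the tail value starting at `b_k`, and `q(k, n)` the continuant of the window
`b_k, …, b_{k+n-1}`. Expanding the continuant from the front instead of the back gives
`q(0, n+1) = (b_0 + v_1) q(1, n)`, i.e. `v_0 = ε_0 q(1, n) / q(0, n+1)`; so the product of the
tail values telescopes to `(∏ ε_k) / q_m`. When `b_k ≥ 2` and `|ε_k| ≤ 1`, every tail value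
has modulus `< 1`, which keeps all the denominators `b_k + v_{k+1} > 1` away from zero, and
`q_l` is strictly increasing, hence positive.
-/

open Finset

section SignedContinuedFraction

variable (b ε : ℕ → ℤ)

theorem scf_shift (j : ℕ) : ∀ n k,
    scf b ε (k + j) n = scf (fun i => b (i + j)) (fun i => ε (i + j)) k n
  | 0, _ => rfl
  | n + 1, k => by
    rw [scf, scf, ← scf_shift j n (k + 1), Nat.add_right_comm k 1 j]

theorem scfWD_shift (j : ℕ) : ∀ n k,
    scfWD b ε (k + j) n ↔ scfWD (fun i => b (i + j)) (fun i => ε (i + j)) k n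
  | 0, _ => Iff.rfl
  | n + 1, k => by
    rw [scfWD, scfWD, ← scf_shift b ε j n (k + 1), ← scfWD_shift j n (k + 1),
      Nat.add_right_comm k 1 j]

theorem exists_rat_eq_scf : ∀ n k, ∃ v : ℚ, scf b ε k n = v
  | 0, _ => ⟨0, by simp [scf]⟩
  | n + 1, k => by
    obtain ⟨w, hw⟩ := exists_rat_eq_scf n (k + 1)
    exact ⟨ε k / (b k + w), by simp [scf, hw]⟩

/-- Continuants can be expanded from the front as well as from the back. -/
theorem scfDen_add_two : ∀ n, scfDen b ε (n + 2) =
    b 0 * scfDen (fun i => b (i + 1)) (fun i => ε (i + 1)) (n + 1) +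
      ε 1 * scfDen (fun i => b (i + 2)) (fun i => ε (i + 2)) n
  | 0 => by simp [scfDen]
  | 1 => by simp [scfDen]; ring
  | n + 2 => by
    rw [scfDen, scfDen_add_two (n + 1), scfDen_add_two n]
    simp only [scfDen]
    ring

theorem scfDen_add_two_eq_mul (n : ℕ) (hwd : scfWD b ε 1 n) :
    (scfDen b ε (n + 2) : ℝ) =
      (b 0 + scf b ε 1 n) * scfDen (fun i => b (i + 1)) (fun i => ε (i + 1)) (n + 1) := by
  induction n generalizing b ε with
  | zero => simp [scfDen, scf]
  | succ n ih =>
    obtain ⟨hden, hwd⟩ := hwd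
    have htail := ih (fun i => b (i + 1)) (fun i => ε (i + 1)) ((scfWD_shift b ε 1 n 1).1 hwd)
    rw [← scf_shift b ε 1 n 1] at htail
    rw [scfDen_add_two, scf]
    push_cast
    rw [htail]
    field_simp

theorem prod_scf_mul_scfDen (n : ℕ) (hwd : scfWD b ε 0 n) :
    (∏ j ∈ range n, scf b ε j (n - j)) * scfDen b ε (n + 1) =
      ∏ j ∈ range n, (ε j : ℝ) := by
  induction n generalizing b ε with
  | zero => simp [scfDen]
  | succ n ih =>
    obtain ⟨hden, hwd⟩ := hwd
    have htail := ih (fun i => b (i + 1)) (fun i => ε (i + 1)) ((scfWD_shift b ε 1 n 0).1 hwd)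
    simp only [prod_range_succ', Nat.add_sub_add_right, Nat.sub_zero, scf_shift b ε 1]
    rw [scfDen_add_two_eq_mul b ε n hwd, ← htail, scf, zero_add]
    field_simp

theorem scfWD_and_abs_scf_lt_one (n : ℕ) (hb : ∀ i < n, 2 ≤ b i)
    (hε : ∀ i < n, |ε i| ≤ 1) :
    scfWD b ε 0 n ∧ |scf b ε 0 n| < 1 := by
  induction n generalizing b ε with
  | zero => simp [scfWD, scf]
  | succ n ih =>
    obtain ⟨hwd, hlt⟩ := ih (fun i => b (i + 1)) (fun i => ε (i + 1))
      (fun i hi => hb (i + 1) (by omega)) (fun i hi => hε (i + 1) (by omega))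
    rw [← scfWD_shift b ε 1 n 0] at hwd
    rw [← scf_shift b ε 1 n 0, zero_add] at hlt
    have hb0 : (2 : ℝ) ≤ b 0 := by exact_mod_cast hb 0 n.succ_pos
    have hε0 : |(ε 0 : ℝ)| ≤ 1 := by exact_mod_cast hε 0 n.succ_pos
    have hden : 1 < (b 0 : ℝ) + scf b ε 1 n := by linarith [neg_abs_le (scf b ε 1 n)]
    have hden_pos : 0 < (b 0 : ℝ) + scf b ε 1 n := zero_lt_one.trans hden
    refine ⟨⟨hden_pos.ne', hwd⟩, ?_⟩
    rw [scf, zero_add, abs_div, abs_of_pos hden_pos, div_lt_one hden_pos]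
    linarith

theorem scfDen_nonneg_and_lt_succ (n : ℕ) (hb : ∀ i < n, 2 ≤ b i)
    (hε : ∀ i < n, |ε i| ≤ 1) :
    0 ≤ scfDen b ε n ∧ scfDen b ε n < scfDen b ε (n + 1) := by
  induction n with
  | zero => simp [scfDen]
  | succ n ih =>
    obtain ⟨hnonneg, hlt⟩ := ih (fun i hi => hb i (by omega)) (fun i hi => hε i (by omega))
    have hbn := hb n n.lt_succ_self
    have hεn := neg_le_of_abs_le (hε n n.lt_succ_self)
    refine ⟨by omega, ?_⟩
    rw [scfDen]
    nlinarith

end SignedContinuedFraction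

theorem scf_tail_product_eq_inv_den_general (m : ℕ) (b ε : ℕ → ℤ)
    (hb : ∀ i < m, 2 ≤ b i) (hε : ∀ i < m, ε i = 1 ∨ ε i = -1) :
    (∀ k < m, scfWD b ε k (m - k) ∧ scf b ε k (m - k) ≠ 0 ∧
      ∃ v : ℚ, scf b ε k (m - k) = (v : ℝ)) ∧
    (∏ k ∈ Finset.range m, |scf b ε k (m - k)|) = 1 / (scfDen b ε (m + 1) : ℝ) := by
  have hε_abs : ∀ i < m, |(ε i : ℝ)| = 1 := fun i hi => by
    rcases hε i hi with h | h <;> simp [h]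
  have hε_le : ∀ i < m, |ε i| ≤ 1 := fun i hi => by exact_mod_cast (hε_abs i hi).le
  have hwd (k : ℕ) (hk : k < m) : scfWD b ε k (m - k) := by
    have := (scfWD_shift b ε k (m - k) 0).2 (scfWD_and_abs_scf_lt_one _ _ (m - k)
      (fun i hi => hb (i + k) (by omega)) (fun i hi => hε_le (i + k) (by omega))).1
    rwa [zero_add] at this
  have hprod := prod_scf_mul_scfDen b ε m (scfWD_and_abs_scf_lt_one b ε m hb hε_le).1
  have hden : (0 : ℝ) < scfDen b ε (m + 1) := by
    have := scfDen_nonneg_and_lt_succ b ε m hb hε_le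
    exact_mod_cast (by omega : 0 < scfDen b ε (m + 1))
  have hprod_abs : (∏ k ∈ range m, |scf b ε k (m - k)|) * scfDen b ε (m + 1) = 1 := by
    have := congrArg abs hprod
    rwa [abs_mul, abs_prod, abs_prod, prod_congr rfl (fun i hi => hε_abs i (mem_range.1 hi)),
      prod_const_one, abs_of_pos hden] at this
  refine ⟨fun k hk => ⟨hwd k hk, ?_, exists_rat_eq_scf b ε _ _⟩,
    eq_one_div_of_mul_eq_one_left hprod_abs⟩
  have hprod_ne : ∏ k ∈ range m, |scf b ε k (m - k)| ≠ 0 :=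
    left_ne_zero_of_mul_eq_one hprod_abs
  exact abs_ne_zero.1 (prod_ne_zero_iff.1 hprod_ne k (mem_range.2 hk))

/-- For entries `b_i ≥ 2` and signs `ε_i = ±1`, each tail value
`v_k = [⟨b_j : ε_j⟩_{j=k}^m]` is a well-defined nonzero rational number, and the
product of their absolute values equals `1/q_m`. (Indices are 0-based.) -/
theorem scf_tail_product_eq_inv_den (m : ℕ) (hm : 1 ≤ m) (b ε : ℕ → ℤ)
    (hb : ∀ i < m, 2 ≤ b i) (hε : ∀ i < m, ε i = 1 ∨ ε i = -1) :
    (∀ k < m, scfWD b ε k (m - k) ∧ scf b ε k (m - k) ≠ 0 ∧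
      ∃ v : ℚ, scf b ε k (m - k) = (v : ℝ)) ∧
    (∏ k ∈ Finset.range m, |scf b ε k (m - k)|) = 1 / (scfDen b ε (m + 1) : ℝ) :=
  scf_tail_product_eq_inv_den_general m b ε hb hε
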